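/- Let ε ∈ (0,1] and let h(x) = 6x²(1 − ε U((x₀−x)/x₀)) for 0 ≤ x < x₀ and h(x) = 6x² for x ≥ x₀, with x₀ = (3/5)^{1/4} and U(τ) = (7τ² − 8τ + 2)τ². Then ∫₀¹ h(tx)(1−x)/x dx ≤ t² for all t ≥ 0, but ∫₀^∞ h(t)/(t(1+t⁴)) dt > 3π/2. Hence h is a counterexample to Khabibullin's conjecture (second formulation) with n = 2, α = 2. -/

import Mathlib

/-!
Write `h ε t = t * (6 * t - ε * defect t)`, where `defect = Q''` on `[0, x₀]` and `0` beyond, for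
`Q t = t³ (1 - t / x₀)⁴`; both `Q` and `Q'` vanish at `0` and at `x₀`.

Substituting `y = t x`, the first integral is `t⁻¹ ∫₀ᵗ (t - y) (6 y - ε defect y) dy`, and Taylor's
formula with integral remainder evaluates it to `t² - ε Q (min t x₀) / t ≤ t²`.

For the second, `∫₀^∞ 6 t / (1 + t⁴) dt = 3π/2`, while two integrations by parts turn
`∫₀^x₀ defect · φ` into `∫₀^x₀ Q · φ''` with `φ t = (1 + t⁴)⁻¹`. Since `x₀⁴ = 3/5`, `x₀` is the
inflection point of `φ`, so `φ'' < 0 < Q` on `(0, x₀)` and the correction has the good sign.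
-/

open MeasureTheory Real

noncomputable def U (τ : ℝ) : ℝ := (7 * τ^2 - 8 * τ + 2) * τ^2

noncomputable def x₀ : ℝ := (3/5 : ℝ) ^ ((1:ℝ)/4)

noncomputable def h (ε x : ℝ) : ℝ :=
  if x < x₀ then 6 * x^2 * (1 - ε * U ((x₀ - x) / x₀)) else 6 * x^2

open Set

theorem integral_sub_mul_deriv2_eq {f f' f'' : ℝ → ℝ} {a b t : ℝ}
    (hf : ∀ y ∈ uIcc a b, HasDerivAt f (f' y) y) (hf' : ∀ y ∈ uIcc a b, HasDerivAt f' (f'' y) y)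
    (hf'' : IntervalIntegrable f'' volume a b) :
    ∫ y in a..b, (t - y) * f'' y = (t - b) * f' b + f b - ((t - a) * f' a + f a) := by
  refine intervalIntegral.integral_eq_sub_of_hasDerivAt (f := fun y => (t - y) * f' y + f y)
    (fun y hy => ?_) (hf''.continuousOn_mul (continuousOn_const.sub continuousOn_id))
  exact ((((hasDerivAt_id y).const_sub t).mul (hf' y hy)).add (hf y hy)).congr_deriv (by simp)

theorem integral_deriv2_mul_sub_mul_deriv2_eq {f f' f'' g g' g'' : ℝ → ℝ} {a b : ℝ}
    (hf : ∀ y ∈ uIcc a b, HasDerivAt f (f' y) y) (hf' : ∀ y ∈ uIcc a b, HasDerivAt f' (f'' y) y)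
    (hg : ∀ y ∈ uIcc a b, HasDerivAt g (g' y) y) (hg' : ∀ y ∈ uIcc a b, HasDerivAt g' (g'' y) y)
    (hf'' : IntervalIntegrable f'' volume a b) (hg'' : IntervalIntegrable g'' volume a b) :
    ∫ y in a..b, (f'' y * g y - f y * g'' y)
      = (f' b * g b - f b * g' b) - (f' a * g a - f a * g' a) := by
  have hfc : ContinuousOn f (uIcc a b) := fun y hy => (hf y hy).continuousAt.continuousWithinAt
  have hgc : ContinuousOn g (uIcc a b) := fun y hy => (hg y hy).continuousAt.continuousWithinAt
  refine intervalIntegral.integral_eq_sub_of_hasDerivAt (f := fun y => f' y * g y - f y * g' y)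
    (fun y hy => ?_) ((hf''.mul_continuousOn hgc).sub (hg''.continuousOn_mul hfc))
  exact (((hf' y hy).mul (hg y hy)).sub ((hf y hy).mul (hg' y hy))).congr_deriv (by ring)

section Bump

variable (a : ℝ)

noncomputable def bump (t : ℝ) : ℝ := t ^ 3 * (1 - t / a) ^ 4

noncomputable def bumpDeriv (t : ℝ) : ℝ := t ^ 2 * (1 - t / a) ^ 3 * (3 - 7 * t / a)

noncomputable def bumpDeriv2 (t : ℝ) : ℝ := 6 * t * U (1 - t / a)

theorem hasDerivAt_bump (t : ℝ) : HasDerivAt (bump a) (bumpDeriv a t) t := by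
  have h1 : HasDerivAt (fun t => 1 - t / a) (-(1 / a)) t :=
    ((hasDerivAt_id t).div_const a).const_sub 1
  refine ((hasDerivAt_pow 3 t).mul (h1.pow 4)).congr_deriv ?_
  simp only [bumpDeriv, Pi.pow_apply]
  ring

theorem hasDerivAt_bumpDeriv (t : ℝ) : HasDerivAt (bumpDeriv a) (bumpDeriv2 a t) t := by
  have h1 : HasDerivAt (fun t => 1 - t / a) (-(1 / a)) t :=
    ((hasDerivAt_id t).div_const a).const_sub 1
  have h2 : HasDerivAt (fun t => 3 - 7 * t / a) (-(7 / a)) t := by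
    simpa using (((hasDerivAt_id t).const_mul 7).div_const a).const_sub 3
  refine (((hasDerivAt_pow 2 t).mul (h1.pow 3)).mul h2).congr_deriv ?_
  simp only [bumpDeriv2, U, Pi.pow_apply, Pi.mul_apply]
  ring

theorem continuous_bumpDeriv2 : Continuous (bumpDeriv2 a) := by
  unfold bumpDeriv2 U
  fun_prop

theorem bump_nonneg {t : ℝ} (ht : 0 ≤ t) : 0 ≤ bump a t := by
  unfold bump
  positivity

theorem bump_zero : bump a 0 = 0 := by simp [bump]

theorem bumpDeriv_zero : bumpDeriv a 0 = 0 := by simp [bumpDeriv]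

variable {a}

theorem bump_self (ha : a ≠ 0) : bump a a = 0 := by simp [bump, ha]

theorem bumpDeriv_self (ha : a ≠ 0) : bumpDeriv a a = 0 := by simp [bumpDeriv, ha]

theorem bumpDeriv2_self (ha : a ≠ 0) : bumpDeriv2 a a = 0 := by simp [bumpDeriv2, U, ha]

theorem bump_pos {t : ℝ} (ht₀ : 0 < t) (hta : t < a) : 0 < bump a t := by
  have : 0 < 1 - t / a := by linarith [(div_lt_one (ht₀.trans hta)).2 hta]
  unfold bump
  positivity

end Bump

theorem x₀_pos : 0 < x₀ := rpow_pos_of_pos (by norm_num) _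

theorem x₀_pow_four : x₀ ^ 4 = 3 / 5 := by
  rw [x₀, ← rpow_natCast, ← rpow_mul (by norm_num)]
  norm_num

noncomputable def defect (t : ℝ) : ℝ := if t ≤ x₀ then bumpDeriv2 x₀ t else 0

theorem continuous_defect : Continuous defect :=
  (continuous_bumpDeriv2 x₀).if_le continuous_const continuous_id continuous_const
    fun t ht => by rw [ht]; exact bumpDeriv2_self x₀_pos.ne'

theorem defect_eq_zero_of_le {t : ℝ} (ht : x₀ ≤ t) : defect t = 0 := by
  rcases ht.eq_or_lt with rfl | hlt
  · simp [defect, bumpDeriv2_self x₀_pos.ne']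
  · simp [defect, not_le.2 hlt]

theorem h_eq_mul_sub_defect (ε t : ℝ) : h ε t = t * (6 * t - ε * defect t) := by
  have hx₀ := x₀_pos.ne'
  have hU : (x₀ - t) / x₀ = 1 - t / x₀ := by field_simp
  unfold h defect
  split_ifs with hlt hle hle
  · rw [hU, bumpDeriv2]; ring
  · exact absurd hlt.le hle
  · rw [le_antisymm hle (not_lt.1 hlt), bumpDeriv2_self hx₀]; ring
  · ring

theorem integral_sub_mul_defect_of_le {m : ℝ} (t : ℝ) (hm₀ : 0 ≤ m) (hm : m ≤ x₀) :
    ∫ y in 0..m, (t - y) * defect y = (t - m) * bumpDeriv x₀ m + bump x₀ m := by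
  have hdefect : EqOn (fun y => (t - y) * defect y) (fun y => (t - y) * bumpDeriv2 x₀ y)
      (uIcc 0 m) := by
    intro y hy
    rw [uIcc_of_le hm₀] at hy
    simp [defect, hy.2.trans hm]
  rw [intervalIntegral.integral_congr hdefect,
    integral_sub_mul_deriv2_eq (fun y _ => hasDerivAt_bump x₀ y)
      (fun y _ => hasDerivAt_bumpDeriv x₀ y) ((continuous_bumpDeriv2 x₀).intervalIntegrable _ _)]
  simp [bump_zero, bumpDeriv_zero]

theorem integral_sub_mul_defect {t : ℝ} (ht : 0 ≤ t) :
    ∫ y in 0..t, (t - y) * defect y = bump x₀ (min t x₀) := by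
  rcases le_total t x₀ with htx | hxt
  · rw [min_eq_left htx, integral_sub_mul_defect_of_le t ht htx]
    ring
  have hcont : Continuous fun y => (t - y) * defect y := by
    have := continuous_defect
    fun_prop
  have hzero : EqOn (fun y => (t - y) * defect y) 0 (uIcc x₀ t) := by
    intro y hy
    rw [uIcc_of_le hxt] at hy
    simp [defect_eq_zero_of_le hy.1]
  rw [min_eq_right hxt, ← intervalIntegral.integral_add_adjacent_intervals
    (hcont.intervalIntegrable 0 x₀) (hcont.intervalIntegrable x₀ t),
    integral_sub_mul_defect_of_le t x₀_pos.le le_rfl, intervalIntegral.integral_congr hzero,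
    bumpDeriv_self x₀_pos.ne', bump_self x₀_pos.ne']
  simp

theorem integral_sub_mul_six_mul (t : ℝ) : ∫ y in 0..t, (t - y) * (6 * y) = t ^ 3 := by
  have hcube (y : ℝ) : HasDerivAt (fun y => y ^ 3) (3 * y ^ 2) y := by
    simpa using hasDerivAt_pow 3 y
  have hsq (y : ℝ) : HasDerivAt (fun y => 3 * y ^ 2) (6 * y) y :=
    HasDerivAt.congr_deriv (by simpa using (hasDerivAt_pow 2 y).const_mul (3:ℝ)) (by ring)
  rw [integral_sub_mul_deriv2_eq (fun y _ => hcube y) (fun y _ => hsq y)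
    ((continuous_const_mul 6).intervalIntegrable _ _)]
  ring

theorem integral_h_comp_mul_le {ε t : ℝ} (hε : 0 ≤ ε) (ht : 0 ≤ t) :
    ∫ x in (0:ℝ)..1, h ε (t * x) * (1 - x) / x ≤ t ^ 2 := by
  rcases ht.eq_or_lt with rfl | ht
  · simp [h_eq_mul_sub_defect]
  set F : ℝ → ℝ := fun y => (t - y) * (6 * y - ε * defect y) with hF
  have hsubst (x : ℝ) : h ε (t * x) * (1 - x) / x = F (t * x) := by
    rcases eq_or_ne x 0 with rfl | hx
    · simp [hF, defect, bumpDeriv2, x₀_pos.le]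
    · rw [hF, h_eq_mul_sub_defect]
      field_simp
  have hint : IntervalIntegrable (fun y => (t - y) * defect y) volume 0 t := by
    have := continuous_defect
    exact Continuous.intervalIntegrable (by fun_prop) _ _
  have hbump : 0 ≤ bump x₀ (min t x₀) := bump_nonneg x₀ (le_min ht.le x₀_pos.le)
  calc ∫ x in (0:ℝ)..1, h ε (t * x) * (1 - x) / x
      = t⁻¹ * ∫ y in 0..t, F y := by
        simp only [hsubst]
        rw [intervalIntegral.integral_comp_mul_left F ht.ne', mul_zero, mul_one, smul_eq_mul]
    _ = t⁻¹ * ((∫ y in 0..t, (t - y) * (6 * y)) - ε * ∫ y in 0..t, (t - y) * defect y) := by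
        rw [← intervalIntegral.integral_const_mul ε, ← intervalIntegral.integral_sub
          (Continuous.intervalIntegrable (by fun_prop) _ _) (hint.const_mul ε)]
        congr 1
        exact intervalIntegral.integral_congr fun y _ => by simp only [hF]; ring
    _ = t ^ 2 - ε * (t⁻¹ * bump x₀ (min t x₀)) := by
        rw [integral_sub_mul_six_mul, integral_sub_mul_defect ht.le]
        field_simp
    _ ≤ t ^ 2 := by
        have := mul_nonneg hε (mul_nonneg (inv_nonneg.2 ht.le) hbump)
        linarith

theorem hasDerivAt_inv_one_add_pow_four (t : ℝ) :
    HasDerivAt (fun t => (1 + t ^ 4)⁻¹) (-4 * t ^ 3 / (1 + t ^ 4) ^ 2) t := by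
  refine (((hasDerivAt_pow 4 t).const_add 1).inv (by positivity)).congr_deriv ?_
  push_cast
  ring

theorem hasDerivAt_neg_four_mul_pow_three_div (t : ℝ) :
    HasDerivAt (fun t => -4 * t ^ 3 / (1 + t ^ 4) ^ 2)
      (4 * t ^ 2 * (5 * t ^ 4 - 3) / (1 + t ^ 4) ^ 3) t := by
  refine (((hasDerivAt_pow 3 t).const_mul (-4)).div (((hasDerivAt_pow 4 t).const_add 1).pow 2)
    (by simp only [Pi.pow_apply]; positivity)).congr_deriv ?_
  simp only [Pi.pow_apply]
  field_simp
  push_cast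
  ring

theorem integral_bump_mul_deriv2_neg :
    ∫ t in 0..x₀, bump x₀ t * (4 * t ^ 2 * (5 * t ^ 4 - 3) / (1 + t ^ 4) ^ 3) < 0 := by
  have hneg : ∀ t ∈ Ioo 0 x₀,
      0 < -(bump x₀ t * (4 * t ^ 2 * (5 * t ^ 4 - 3) / (1 + t ^ 4) ^ 3)) := by
    rintro t ⟨ht₀, htx⟩
    have hpow : t ^ 4 < x₀ ^ 4 := pow_lt_pow_left₀ htx ht₀.le (by norm_num)
    rw [x₀_pow_four] at hpow
    have hnum : 4 * t ^ 2 * (5 * t ^ 4 - 3) < 0 :=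
      mul_neg_of_pos_of_neg (by positivity) (by linarith)
    have hden : 0 < (1 + t ^ 4) ^ 3 := by positivity
    exact neg_pos.2 (mul_neg_of_pos_of_neg (bump_pos ht₀ htx) (div_neg_of_neg_of_pos hnum hden))
  have hcont :
      Continuous fun t => -(bump x₀ t * (4 * t ^ 2 * (5 * t ^ 4 - 3) / (1 + t ^ 4) ^ 3)) := by
    unfold bump
    fun_prop (disch := intro; positivity)
  have hpos := intervalIntegral.intervalIntegral_pos_of_pos_on (hcont.intervalIntegrable _ _) hneg
    x₀_pos
  rw [intervalIntegral.integral_neg] at hpos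
  linarith

theorem integral_defect_div_neg : ∫ t in 0..x₀, defect t / (1 + t ^ 4) < 0 := by
  have hx₀ := x₀_pos.ne'
  have hdefect : EqOn (fun t => defect t / (1 + t ^ 4))
      (fun t => bumpDeriv2 x₀ t * (1 + t ^ 4)⁻¹) (uIcc 0 x₀) := by
    intro t ht
    rw [uIcc_of_le x₀_pos.le] at ht
    simp [defect, ht.2, div_eq_mul_inv]
  have hcont₁ : Continuous fun t => bumpDeriv2 x₀ t * (1 + t ^ 4)⁻¹ :=
    (continuous_bumpDeriv2 x₀).mul (by fun_prop (disch := intro; positivity))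
  have hcont₂ :
      Continuous fun t => bump x₀ t * (4 * t ^ 2 * (5 * t ^ 4 - 3) / (1 + t ^ 4) ^ 3) := by
    unfold bump
    fun_prop (disch := intro; positivity)
  have hgreen := integral_deriv2_mul_sub_mul_deriv2_eq (a := 0) (b := x₀)
    (fun t _ => hasDerivAt_bump x₀ t) (fun t _ => hasDerivAt_bumpDeriv x₀ t)
    (fun t _ => hasDerivAt_inv_one_add_pow_four t)
    (fun t _ => hasDerivAt_neg_four_mul_pow_three_div t)
    ((continuous_bumpDeriv2 x₀).intervalIntegrable _ _)
    (Continuous.intervalIntegrable (by fun_prop (disch := intro; positivity)) _ _)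
  rw [intervalIntegral.integral_sub (hcont₁.intervalIntegrable _ _)
    (hcont₂.intervalIntegrable _ _), bump_zero, bumpDeriv_zero, bump_self hx₀,
    bumpDeriv_self hx₀] at hgreen
  rw [intervalIntegral.integral_congr hdefect]
  linarith [integral_bump_mul_deriv2_neg]

theorem hasDerivAt_three_mul_arctan_sq (t : ℝ) :
    HasDerivAt (fun t => 3 * arctan (t ^ 2)) (6 * t / (1 + t ^ 4)) t := by
  refine (((hasDerivAt_pow 2 t).arctan).const_mul 3).congr_deriv ?_
  field_simp
  ring

theorem tendsto_three_mul_arctan_sq :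
    Filter.Tendsto (fun t => 3 * arctan (t ^ 2)) Filter.atTop (nhds (3 * π / 2)) := by
  rw [mul_div_assoc]
  exact ((tendsto_arctan_atTop.mono_right nhdsWithin_le_nhds).comp
    (Filter.tendsto_pow_atTop two_ne_zero)).const_mul 3

theorem six_mul_div_one_add_pow_four_nonneg {t : ℝ} (ht : 0 ≤ t) : 0 ≤ 6 * t / (1 + t ^ 4) := by
  positivity

theorem integrableOn_six_mul_div_one_add_pow_four :
    IntegrableOn (fun t => 6 * t / (1 + t ^ 4)) (Ioi (0:ℝ)) :=
  integrableOn_Ioi_deriv_of_nonneg' (fun t _ => hasDerivAt_three_mul_arctan_sq t)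
    (fun _ ht => six_mul_div_one_add_pow_four_nonneg (le_of_lt ht)) tendsto_three_mul_arctan_sq

theorem integral_six_mul_div_one_add_pow_four :
    ∫ t in Ioi (0:ℝ), 6 * t / (1 + t ^ 4) = 3 * π / 2 := by
  rw [integral_Ioi_of_hasDerivAt_of_nonneg' (fun t _ => hasDerivAt_three_mul_arctan_sq t)
    (fun _ ht => six_mul_div_one_add_pow_four_nonneg (le_of_lt ht)) tendsto_three_mul_arctan_sq]
  simp

theorem integral_h_div_eq (ε : ℝ) :
    ∫ t in Ioi (0:ℝ), h ε t / (t * (1 + t ^ 4))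
      = 3 * π / 2 - ε * ∫ t in 0..x₀, defect t / (1 + t ^ 4) := by
  have hvanish : ∀ t ∈ Ioi 0 \ Ioc 0 x₀, defect t / (1 + t ^ 4) = 0 := fun t ht => by
    rw [defect_eq_zero_of_le (not_le.1 fun h => ht.2 ⟨ht.1, h⟩).le, zero_div]
  have hcont : Continuous fun t => defect t / (1 + t ^ 4) := by
    have := continuous_defect
    fun_prop (disch := intro; positivity)
  have hint : IntegrableOn (fun t => defect t / (1 + t ^ 4)) (Ioi (0:ℝ)) :=
    (hcont.integrableOn_Icc.mono_set Ioc_subset_Icc_self).of_forall_sdiff_eq_zero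
      measurableSet_Ioi hvanish
  have hsplit : ∀ t ∈ Ioi (0:ℝ),
      h ε t / (t * (1 + t ^ 4)) = 6 * t / (1 + t ^ 4) - ε * (defect t / (1 + t ^ 4)) := by
    intro t ht
    have : t ≠ 0 := ne_of_gt ht
    rw [h_eq_mul_sub_defect]
    field_simp
  rw [setIntegral_congr_fun measurableSet_Ioi hsplit,
    integral_sub integrableOn_six_mul_div_one_add_pow_four (hint.const_mul ε),
    integral_const_mul, integral_six_mul_div_one_add_pow_four,
    setIntegral_eq_of_subset_of_forall_sdiff_eq_zero measurableSet_Ioi Ioc_subset_Ioi_self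
      hvanish,
    intervalIntegral.integral_of_le x₀_pos.le]

theorem h_counterexample_general (ε : ℝ) (hε0 : 0 < ε) :
    (∀ t : ℝ, 0 ≤ t → (∫ x in (0:ℝ)..1, h ε (t * x) * (1 - x) / x) ≤ t ^ 2) ∧
    3 * π / 2 < ∫ t in Set.Ioi (0:ℝ), h ε t / (t * (1 + t^4)) := by
  refine ⟨fun t ht => integral_h_comp_mul_le hε0.le ht, ?_⟩
  rw [integral_h_div_eq]
  linarith [mul_neg_of_pos_of_neg hε0 integral_defect_div_neg]

theorem h_counterexample (ε : ℝ) (hε0 : 0 < ε) (hε1 : ε ≤ 1) :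
    (∀ t : ℝ, 0 ≤ t → (∫ x in (0:ℝ)..1, h ε (t * x) * (1 - x) / x) ≤ t ^ 2) ∧
    3 * π / 2 < ∫ t in Set.Ioi (0:ℝ), h ε t / (t * (1 + t^4)) :=
  h_counterexample_general ε hε0
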